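/- arXiv:math/0610794 — 4 statements merged into one kernel-verified Lean document; each statement's English description precedes it below -/
import Mathlib

section
/- Let $m \le n$ and $\gamma \in \Pi_{m,n}$. The elements of $\Pi_{m,n}$ that are strictly greater than $\gamma$ in $\le_{st}$ and differ from $\gamma$ in exactly one element (i.e., $|\alpha \setminus \gamma| = 1$) are precisely the sets $(\gamma \setminus \{\gamma_{m+1-i}\}) \cup \{j\}$ with $(i,j) \in \mathcal{L}_\gamma$; moreover, the map $(i,j) \mapsto (\gamma \setminus \{\gamma_{m+1-i}\}) \cup \{j\}$ from $\mathcal{L}_\gamma$ to this set of elements is a bijection. -/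
/-- The order `≤_st`: compare increasing enumerations componentwise. -/
def leSt (I J : Finset ℕ) : Prop :=
  List.Forall₂ (· ≤ ·) (I.sort (· ≤ ·)) (J.sort (· ≤ ·))

/-- The ladder `𝓛_γ`. -/
def ladder (m n : ℕ) (γ : Finset ℕ) : Finset (ℕ × ℕ) :=
  (Finset.Icc 1 m ×ˢ Finset.Icc 1 n).filter
    (fun p => (γ.sort (· ≤ ·)).getD (m - p.1) 0 < p.2 ∧ p.2 ∉ γ)

/-!
Counting elements below a threshold turns `≤_st` into a family of cardinality inequalities:
`I ≤_st J` iff every `{x ≤ c}` contains at most as many elements of `J` as of `I`.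
Replacing `a ∈ γ` by `j ∉ γ` changes these counts by `[j ≤ c] - [a ≤ c]`, so the swap lies
above `γ` exactly when `a < j`. A set with `|α \ γ| = 1` is such a swap, and `(i, j) ∈ 𝓛_γ`
records precisely a swap of `a = γ_{m+1-i}` for some `j > a`. The swap determines `a` and `j`
as the single elements of `γ \ α` and `α \ γ`, and `a` determines `i`, whence injectivity.
-/

open Finset

namespace Finset

theorem lt_card_filter_le_iff_getElem_sort_le {α : Type*} [LinearOrder α] (s : Finset α)
    {t : ℕ} (ht : t < (s.sort (· ≤ ·)).length) (c : α) :
    t < #{x ∈ s | x ≤ c} ↔ (s.sort (· ≤ ·))[t] ≤ c := by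
  set e := s.orderEmbOfFin rfl
  have ht' : t < #s := by rwa [length_sort] at ht
  have hcard : #{x ∈ s | x ≤ c} = #{i | e i ≤ c} := by
    conv_lhs => rw [← map_orderEmbOfFin_univ s rfl, filter_map, card_map]
    rfl
  change t < _ ↔ e ⟨t, ht'⟩ ≤ c
  rw [hcard]
  constructor
  · intro h
    by_contra! hlt
    have hsub : ({i | e i ≤ c} : Finset (Fin #s)) ⊆ Iio ⟨t, ht'⟩ := fun i hi =>
      mem_Iio.2 (e.lt_iff_lt.1 ((mem_filter.1 hi).2.trans_lt hlt))
    have := card_le_card hsub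
    rw [Fin.card_Iio] at this
    exact this.not_gt h
  · intro h
    have hsub : Iic ⟨t, ht'⟩ ⊆ ({i | e i ≤ c} : Finset (Fin #s)) := fun i hi =>
      mem_filter.2 ⟨mem_univ _, (e.monotone (mem_Iic.1 hi)).trans h⟩
    have := card_le_card hsub
    rwa [Fin.card_Iic] at this

section LinearOrder

variable {α : Type*} [LinearOrder α] (s : Finset α) (d : α)

theorem getD_sort_mem {k : ℕ} (hk : k < #s) : (s.sort (· ≤ ·)).getD k d ∈ s := by
  rw [List.getD_eq_getElem _ _ (by rwa [length_sort]), ← mem_sort (· ≤ ·)]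
  exact List.getElem_mem _

theorem exists_getD_sort_eq {a : α} (ha : a ∈ s) :
    ∃ k < #s, (s.sort (· ≤ ·)).getD k d = a := by
  obtain ⟨k, hk, rfl⟩ := List.getElem_of_mem ((mem_sort (· ≤ ·)).2 ha)
  exact ⟨k, by rwa [length_sort] at hk, List.getD_eq_getElem _ _ hk⟩

theorem getD_sort_injOn : Set.InjOn (fun k => (s.sort (· ≤ ·)).getD k d) (Set.Iio #s) := by
  intro k hk k' hk' h
  have hk : k < (s.sort (· ≤ ·)).length := by rwa [length_sort]
  have hk' : k' < (s.sort (· ≤ ·)).length := by rwa [length_sort]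
  simp only [List.getD_eq_getElem _ _ hk, List.getD_eq_getElem _ _ hk'] at h
  exact (sort_nodup s (· ≤ ·)).getElem_inj_iff.1 h

end LinearOrder

section DecidableEq

variable {α : Type*} [DecidableEq α] {s t : Finset α} {a j : α}

theorem card_filter_insert_erase_add (p : α → Prop) [DecidablePred p] (ha : a ∈ s)
    (hj : j ∉ s) :
    #{x ∈ insert j (s.erase a) | p x} + (if p a then 1 else 0) =
      #{x ∈ s | p x} + (if p j then 1 else 0) := by
  have hjF : j ∉ ({x ∈ s | p x}.erase a) := fun h => hj (mem_filter.1 (mem_of_mem_erase h)).1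
  rw [filter_insert, filter_erase]
  by_cases hpa : p a
  · have haF : a ∈ {x ∈ s | p x} := mem_filter.2 ⟨ha, hpa⟩
    by_cases hpj : p j <;> simp [hpa, hpj, card_insert_of_notMem hjF, card_erase_add_one haF]
  · have haF : a ∉ {x ∈ s | p x} := fun h => hpa (mem_filter.1 h).2
    rw [erase_eq_of_notMem haF] at hjF ⊢
    by_cases hpj : p j <;> simp [hpa, hpj, card_insert_of_notMem hjF]

theorem insert_erase_sdiff_self (hj : j ∉ s) : insert j (s.erase a) \ s = {j} := by
  ext x
  simp only [mem_sdiff, mem_insert, mem_erase, mem_singleton]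
  grind

theorem sdiff_insert_erase_self (ha : a ∈ s) (hj : j ∉ s) :
    s \ insert j (s.erase a) = {a} := by
  ext x
  simp only [mem_sdiff, mem_insert, mem_erase, mem_singleton]
  grind

theorem eq_and_eq_of_insert_erase_eq {a' j' : α} (ha : a ∈ s) (hj : j ∉ s) (ha' : a' ∈ s)
    (hj' : j' ∉ s) (h : insert j (s.erase a) = insert j' (s.erase a')) : a = a' ∧ j = j' := by
  have hsdiff := congrArg (s \ ·) h
  have hsdiff' := congrArg (· \ s) h
  simp only [sdiff_insert_erase_self ha hj, sdiff_insert_erase_self ha' hj',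
    insert_erase_sdiff_self hj, insert_erase_sdiff_self hj', singleton_inj] at hsdiff hsdiff'
  exact ⟨hsdiff, hsdiff'⟩

theorem exists_eq_insert_erase_of_card_sdiff_eq_one (h : #t = #s) (h1 : #(t \ s) = 1) :
    ∃ a ∈ s, ∃ j ∉ s, t = insert j (s.erase a) := by
  obtain ⟨j, hj⟩ := card_eq_one.1 h1
  obtain ⟨a, ha⟩ := card_eq_one.1 ((card_sdiff_comm h.symm).trans h1)
  have hjt : j ∈ t \ s := hj ▸ mem_singleton_self j
  have has : a ∈ s \ t := ha ▸ mem_singleton_self a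
  refine ⟨a, (mem_sdiff.1 has).1, j, (mem_sdiff.1 hjt).2, ?_⟩
  ext x
  have hx1 := congrArg (x ∈ ·) hj
  have hx2 := congrArg (x ∈ ·) ha
  simp only [mem_sdiff, mem_singleton, eq_iff_iff] at hx1 hx2
  simp only [mem_insert, mem_erase]
  tauto

end DecidableEq

end Finset

theorem leSt_iff_card_filter_le {I J : Finset ℕ} (h : #I = #J) :
    leSt I J ↔ ∀ c, #{x ∈ J | x ≤ c} ≤ #{x ∈ I | x ≤ c} := by
  simp only [leSt, List.forall₂_iff_get, List.get_eq_getElem, length_sort, h, true_and]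
  constructor
  · intro hle c
    cases hc : #{x ∈ J | x ≤ c} with
    | zero => exact Nat.zero_le _
    | succ t =>
      have htJ : t < #J := by have := card_filter_le J (· ≤ c); omega
      have hJ : t < (J.sort (· ≤ ·)).length := by rwa [length_sort]
      have hI : t < (I.sort (· ≤ ·)).length := by rwa [length_sort, h]
      rw [Nat.add_one_le_iff, I.lt_card_filter_le_iff_getElem_sort_le hI]
      exact (hle t htJ htJ).trans
        ((J.lt_card_filter_le_iff_getElem_sort_le hJ c).1 (hc ▸ t.lt_add_one))
  · intro hc t hI hJ
    have hI' : t < (I.sort (· ≤ ·)).length := by rwa [length_sort, h]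
    have hJ' : t < (J.sort (· ≤ ·)).length := by rwa [length_sort]
    rw [← I.lt_card_filter_le_iff_getElem_sort_le hI']
    exact ((J.lt_card_filter_le_iff_getElem_sort_le hJ' _).2 le_rfl).trans_le (hc _)

theorem leSt_insert_erase_iff {γ : Finset ℕ} {a j : ℕ} (ha : a ∈ γ) (hj : j ∉ γ) :
    leSt γ (insert j (γ.erase a)) ↔ a < j := by
  have hcard : #γ = #(insert j (γ.erase a)) := by
    rw [card_insert_of_notMem (fun h => hj (mem_of_mem_erase h)), card_erase_add_one ha]
  have hcount (c : ℕ) := card_filter_insert_erase_add (· ≤ c) ha hj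
  rw [leSt_iff_card_filter_le hcard]
  constructor
  · intro hle
    have hj' := hcount j
    have hle' := hle j
    have hne : a ≠ j := ne_of_mem_of_not_mem ha hj
    split_ifs at hj' <;> omega
  · intro hlt c
    have hc := hcount c
    split_ifs at hc <;> omega

theorem mem_ladder {m n : ℕ} {γ : Finset ℕ} {p : ℕ × ℕ} :
    p ∈ ladder m n γ ↔ p.1 ∈ Icc 1 m ∧ p.2 ∈ Icc 1 n ∧
      (γ.sort (· ≤ ·)).getD (m - p.1) 0 < p.2 ∧ p.2 ∉ γ := by
  simp only [ladder, mem_filter, mem_product, and_assoc]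

theorem getD_sort_mem_of_mem_ladder {m n : ℕ} {γ : Finset ℕ} (hγ : #γ = m) {p : ℕ × ℕ}
    (hp : p ∈ ladder m n γ) : (γ.sort (· ≤ ·)).getD (m - p.1) 0 ∈ γ := by
  have hi := mem_Icc.1 (mem_ladder.1 hp).1
  exact getD_sort_mem γ 0 (by omega)

theorem stmt5_general (m n : ℕ) (γ : Finset ℕ) (hγc : γ.card = m) :
    (∀ α : Finset ℕ, α ⊆ Finset.Icc 1 n → α.card = m →
      ((leSt γ α ∧ γ ≠ α ∧ (α \ γ).card = 1) ↔
        ∃ p ∈ ladder m n γ,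
          α = insert p.2 (γ.erase ((γ.sort (· ≤ ·)).getD (m - p.1) 0)))) ∧
    (∀ p ∈ ladder m n γ, ∀ q ∈ ladder m n γ,
      insert p.2 (γ.erase ((γ.sort (· ≤ ·)).getD (m - p.1) 0)) =
        insert q.2 (γ.erase ((γ.sort (· ≤ ·)).getD (m - q.1) 0)) → p = q) := by
  refine ⟨fun α hαs hαc => ⟨?_, ?_⟩, fun p hp q hq h => ?_⟩
  · rintro ⟨hle, -, hone⟩
    obtain ⟨a, ha, j, hj, rfl⟩ :=
      exists_eq_insert_erase_of_card_sdiff_eq_one (hαc.trans hγc.symm) hone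
    obtain ⟨k, hk, rfl⟩ := exists_getD_sort_eq γ 0 ha
    have hkm : m - (m - k) = k := by omega
    refine ⟨(m - k, j), mem_ladder.2 ⟨?_, hαs (mem_insert_self _ _), ?_, hj⟩, by rw [hkm]⟩
    · rw [mem_Icc]; omega
    · rw [hkm]; exact (leSt_insert_erase_iff ha hj).1 hle
  · rintro ⟨p, hp, rfl⟩
    have ha := getD_sort_mem_of_mem_ladder hγc hp
    obtain ⟨-, -, hlt, hj⟩ := mem_ladder.1 hp
    refine ⟨(leSt_insert_erase_iff ha hj).2 hlt, fun h => hj (h ▸ mem_insert_self _ _), ?_⟩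
    rw [insert_erase_sdiff_self hj, card_singleton]
  · obtain ⟨hpi, -, -, hpj⟩ := mem_ladder.1 hp
    obtain ⟨hqi, -, -, hqj⟩ := mem_ladder.1 hq
    obtain ⟨ha, hj⟩ := eq_and_eq_of_insert_erase_eq (getD_sort_mem_of_mem_ladder hγc hp) hpj
      (getD_sort_mem_of_mem_ladder hγc hq) hqj h
    rw [mem_Icc] at hpi hqi
    have hi := getD_sort_injOn γ 0 (by simp only [Set.mem_Iio]; omega)
      (by simp only [Set.mem_Iio]; omega) ha
    exact Prod.ext (by omega) hj

/-- The elements of `Π_{m,n}` strictly greater than `γ` that differ from `γ` by exactly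
one element are precisely the `(γ \ {γ_{m+1-i}}) ∪ {j}` with `(i,j) ∈ 𝓛_γ`, and the map
`(i,j) ↦ (γ \ {γ_{m+1-i}}) ∪ {j}` is a bijection of `𝓛_γ` onto this set. -/
theorem stmt5 (m n : ℕ) (hm : 1 ≤ m) (hmn : m ≤ n) (γ : Finset ℕ)
    (hγs : γ ⊆ Finset.Icc 1 n) (hγc : γ.card = m) :
    (∀ α : Finset ℕ, α ⊆ Finset.Icc 1 n → α.card = m →
      ((leSt γ α ∧ γ ≠ α ∧ (α \ γ).card = 1) ↔
        ∃ p ∈ ladder m n γ,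
          α = insert p.2 (γ.erase ((γ.sort (· ≤ ·)).getD (m - p.1) 0)))) ∧
    (∀ p ∈ ladder m n γ, ∀ q ∈ ladder m n γ,
      insert p.2 (γ.erase ((γ.sort (· ≤ ·)).getD (m - p.1) 0)) =
        insert q.2 (γ.erase ((γ.sort (· ≤ ·)).getD (m - q.1) 0)) → p = q) :=
  stmt5_general m n γ hγc
end

section
/- Let $m \le n$ and define the map $\delta_{m,n}$ from index pairs to index sets as follows: for an index pair $(I,J)$ with $I = \{i_1 < \dots < i_t\} \subseteq \{1,\dots,m\}$ and $J = \{j_1 < \dots < j_t\} \subseteq \{1,\dots,n\}$ of common cardinality $t \ge 1$, set $K_{(I,J)} = (\{j_1,\dots,j_t\} \cup \{n+1,\dots,n+m\}) \setminus \{n+m+1-i_1,\dots,n+m+1-i_t\}$. Then $K_{(I,J)}$ is an $m$-element subset of $\{1,\dots,n+m\}$ different from $M = \{n+1,\dots,n+m\}$, and the map $(I,J) \mapsto K_{(I,J)}$ is a bijection from the set of index pairs $\Delta_{m,n}$ onto $\Pi_{m,m+n} \setminus \{M\}$. -/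
/-- The map `(I,J) ↦ K_{(I,J)} = (J ∪ {n+1,…,n+m}) \ {n+m+1-i : i ∈ I}`. -/
def Kmap (m n : ℕ) (I J : Finset ℕ) : Finset ℕ :=
  (J ∪ Finset.Icc (n + 1) (n + m)) \ (I.image (fun i => n + m + 1 - i))

open Finset

private lemma img_subset (m n : ℕ) {I : Finset ℕ} (hI : I ⊆ Icc 1 m) :
    I.image (fun i => n + m + 1 - i) ⊆ Icc (n + 1) (n + m) := by
  intro x hx
  simp only [mem_image] at hx
  obtain ⟨i, hi, rfl⟩ := hx
  have := hI hi
  simp only [mem_Icc] at this ⊢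
  omega

private lemma img_invol (m n : ℕ) {I : Finset ℕ} (hI : I ⊆ Icc 1 (n + m)) :
    (I.image (fun i => n + m + 1 - i)).image (fun i => n + m + 1 - i) = I := by
  rw [Finset.image_image]
  have h : ∀ x ∈ I, ((fun i => n + m + 1 - i) ∘ fun i => n + m + 1 - i) x = id x := by
    intro x hx
    have := hI hx
    simp only [mem_Icc] at this
    simp only [Function.comp_apply, id_eq]
    omega
  rw [Finset.image_congr h, Finset.image_id]

private lemma img_card (m n : ℕ) {I : Finset ℕ} (hI : I ⊆ Icc 1 (n + m)) :
    (I.image (fun i => n + m + 1 - i)).card = I.card := by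
  apply Finset.card_image_of_injOn
  intro a ha b hb hab
  have ha' := hI ha
  have hb' := hI hb
  simp only [mem_Icc] at ha' hb'
  simp only at hab
  omega

private lemma J_eq (m n : ℕ) {I J : Finset ℕ} (hI : I ⊆ Icc 1 m) (hJ : J ⊆ Icc 1 n) :
    Kmap m n I J ∩ Icc 1 n = J := by
  have himg := img_subset m n hI
  ext x
  simp only [Kmap, mem_inter, mem_sdiff, mem_union, mem_Icc]
  constructor
  · rintro ⟨⟨h1 | h1, h2⟩, h3⟩
    · exact h1
    · exfalso; omega
  · intro hx
    have hxn := hJ hx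
    simp only [mem_Icc] at hxn
    refine ⟨⟨Or.inl hx, ?_⟩, hxn⟩
    intro hmem
    have := himg hmem
    simp only [mem_Icc] at this
    omega

private lemma I_eq (m n : ℕ) {I J : Finset ℕ} (hI : I ⊆ Icc 1 m) (hJ : J ⊆ Icc 1 n) :
    Icc (n + 1) (n + m) \ Kmap m n I J = I.image (fun i => n + m + 1 - i) := by
  have himg := img_subset m n hI
  ext x
  simp only [Kmap, mem_sdiff, mem_union, not_and, not_not]
  constructor
  · rintro ⟨h1, h2⟩
    exact h2 (Or.inr h1)
  · intro hx
    exact ⟨himg hx, fun _ => hx⟩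

/-- `K_{(I,J)}` is an `m`-element subset of `{1,…,n+m}` different from
`M = {n+1,…,n+m}`, and `(I,J) ↦ K_{(I,J)}` is a bijection from the set of index
pairs `Δ_{m,n}` onto `Π_{m,m+n} \ {M}`. -/
theorem stmt9 (m n : ℕ) (hm : 1 ≤ m) (hmn : m ≤ n) :
    (∀ I J : Finset ℕ, I ⊆ Finset.Icc 1 m → J ⊆ Finset.Icc 1 n →
      I.card = J.card → 1 ≤ I.card →
      (Kmap m n I J).card = m ∧ Kmap m n I J ⊆ Finset.Icc 1 (n + m) ∧
        Kmap m n I J ≠ Finset.Icc (n + 1) (n + m)) ∧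
    (∀ I J I' J' : Finset ℕ, I ⊆ Finset.Icc 1 m → J ⊆ Finset.Icc 1 n →
      I.card = J.card → 1 ≤ I.card →
      I' ⊆ Finset.Icc 1 m → J' ⊆ Finset.Icc 1 n → I'.card = J'.card → 1 ≤ I'.card →
      Kmap m n I J = Kmap m n I' J' → I = I' ∧ J = J') ∧
    (∀ K : Finset ℕ, K ⊆ Finset.Icc 1 (n + m) → K.card = m →
      K ≠ Finset.Icc (n + 1) (n + m) →
      ∃ I J : Finset ℕ, I ⊆ Finset.Icc 1 m ∧ J ⊆ Finset.Icc 1 n ∧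
        I.card = J.card ∧ 1 ≤ I.card ∧ Kmap m n I J = K) := by
  refine ⟨?_, ?_, ?_⟩
  · -- membership in the codomain
    intro I J hI hJ hcard hone
    have himg := img_subset m n hI
    have hIsub : I ⊆ Icc 1 (n + m) := hI.trans (Icc_subset_Icc le_rfl (by omega))
    have hdisj : Disjoint J (Icc (n + 1) (n + m)) := by
      rw [Finset.disjoint_left]
      intro a haJ haM
      have h1 := hJ haJ
      simp only [mem_Icc] at h1 haM
      omega
    have hsub : I.image (fun i => n + m + 1 - i) ⊆ J ∪ Icc (n + 1) (n + m) :=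
      himg.trans subset_union_right
    refine ⟨?_, ?_, ?_⟩
    · rw [Kmap, card_sdiff_of_subset hsub, card_union_of_disjoint hdisj,
        img_card m n hIsub, Nat.card_Icc]
      omega
    · intro x hx
      simp only [Kmap, mem_sdiff, mem_union] at hx
      rcases hx.1 with h | h
      · have := hJ h
        simp only [mem_Icc] at this ⊢
        omega
      · simp only [mem_Icc] at h ⊢
        omega
    · intro heq
      obtain ⟨i, hi⟩ := Finset.card_pos.mp hone
      have hfi : n + m + 1 - i ∈ Icc (n + 1) (n + m) := himg (mem_image_of_mem _ hi)
      have hnot : n + m + 1 - i ∉ Kmap m n I J := by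
        simp only [Kmap, mem_sdiff, not_and, not_not]
        intro _
        exact mem_image_of_mem _ hi
      rw [heq] at hnot
      exact hnot hfi
  · -- injectivity
    intro I J I' J' hI hJ hc h1 hI' hJ' hc' h1' heq
    have hIsub : I ⊆ Icc 1 (n + m) := hI.trans (Icc_subset_Icc le_rfl (by omega))
    have hIsub' : I' ⊆ Icc 1 (n + m) := hI'.trans (Icc_subset_Icc le_rfl (by omega))
    have eI : I.image (fun i => n + m + 1 - i) = I'.image (fun i => n + m + 1 - i) := by
      rw [← I_eq m n hI hJ, ← I_eq m n hI' hJ', heq]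
    constructor
    · have := congrArg (Finset.image (fun i => n + m + 1 - i)) eI
      rwa [img_invol m n hIsub, img_invol m n hIsub'] at this
    · rw [← J_eq m n hI hJ, ← J_eq m n hI' hJ', heq]
  · -- surjectivity
    intro K hK hKcard hKne
    set f : ℕ → ℕ := fun i => n + m + 1 - i with hf
    set M : Finset ℕ := Icc (n + 1) (n + m) with hM
    have hMcard : M.card = m := by rw [hM, Nat.card_Icc]; omega
    have hMsub : M \ K ⊆ Icc 1 (n + m) := by
      intro x hx
      have := (mem_sdiff.mp hx).1
      simp only [hM, mem_Icc] at this ⊢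
      omega
    refine ⟨(M \ K).image f, K ∩ Icc 1 n, ?_, inter_subset_right, ?_, ?_, ?_⟩
    · intro x hx
      simp only [mem_image] at hx
      obtain ⟨i, hi, rfl⟩ := hx
      have := (mem_sdiff.mp hi).1
      simp only [hM, mem_Icc] at this
      simp only [hf, mem_Icc]
      omega
    · -- cards equal
      have e1 : (M \ K).card + (M ∩ K).card = M.card := Finset.card_sdiff_add_card_inter M K
      have e2 : (K \ M).card + (K ∩ M).card = K.card := Finset.card_sdiff_add_card_inter K M
      have e3 : K ∩ Icc 1 n = K \ M := by
        ext x
        simp only [mem_inter, mem_sdiff, hM, mem_Icc]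
        constructor
        · rintro ⟨hx, h1, h2⟩
          exact ⟨hx, by omega⟩
        · rintro ⟨hx, h2⟩
          have := hK hx
          simp only [mem_Icc] at this
          refine ⟨hx, by omega⟩
      have e4 : (M ∩ K).card = (K ∩ M).card := by rw [Finset.inter_comm]
      rw [img_card m n hMsub, e3]
      omega
    · -- nonempty
      rw [img_card m n hMsub]
      rcases Nat.eq_zero_or_pos (M \ K).card with h | h
      · exfalso
        have hsub : M ⊆ K := by
          intro x hx
          by_contra hxK
          have : x ∈ M \ K := mem_sdiff.mpr ⟨hx, hxK⟩
          rw [Finset.card_eq_zero.mp h] at this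
          exact absurd this (notMem_empty x)
        have : K = M := (Finset.eq_of_subset_of_card_le hsub (by omega)).symm
        exact hKne this
      · exact h
    · -- Kmap equals K
      have hinv : ((M \ K).image f).image f = M \ K := img_invol m n hMsub
      rw [Kmap]
      rw [show ((M \ K).image f).image (fun i => n + m + 1 - i) = M \ K from hinv]
      ext x
      simp only [mem_sdiff, mem_union, mem_inter, hM, mem_Icc]
      constructor
      · rintro ⟨h1 | h1, h2⟩
        · exact h1.1
        · by_contra hxK
          exact h2 ⟨h1, hxK⟩
      · intro hx
        have hb := hK hx
        simp only [mem_Icc] at hb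
        constructor
        · by_cases hn : x ≤ n
          · exact Or.inl ⟨hx, by omega⟩
          · exact Or.inr (by omega)
        · rintro ⟨_, hxK⟩
          exact hxK hx
end

section
/- Let $m \le n$. The bijection $\delta_{m,n} : \Delta_{m,n} \to \Pi_{m,m+n} \setminus \{M\}$, $(I,J) \mapsto K_{(I,J)}$, is an isomorphism of partially ordered sets, where $\Delta_{m,n}$ carries the order $(I,J) \le_{st} (K,L)$ (with $|I|=|J|=u$, $|K|=|L|=v$) iff $u \ge v$ and $i_s \le k_s$, $j_s \le l_s$ for $1 \le s \le v$, and $\Pi_{m,m+n}$ carries the componentwise order on increasing enumerations. -/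
/-- The order `≤_st` on index pairs: `(I,J) ≤_st (K,L)` iff `|I| ≥ |K|` and the
first `|K|` entries of the increasing enumerations satisfy `i_s ≤ k_s`, `j_s ≤ l_s`. -/
def deltaLe (I J K L : Finset ℕ) : Prop :=
  K.card ≤ I.card ∧ ∀ s < K.card,
    (I.sort (· ≤ ·)).getD s 0 ≤ (K.sort (· ≤ ·)).getD s 0 ∧
    (J.sort (· ≤ ·)).getD s 0 ≤ (L.sort (· ≤ ·)).getD s 0

lemma cnt_lt_iff (A : Finset ℕ) (s : ℕ) (hs : s < A.card) (x : ℕ) :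
    (A.sort (· ≤ ·)).getD s 0 ≤ x ↔ s < (A.filter (· ≤ x)).card := by
  have hlen : (A.sort (· ≤ ·)).length = A.card := A.length_sort _
  have hgd : (A.sort (· ≤ ·)).getD s 0 = A.orderEmbOfFin rfl ⟨s, hs⟩ := by
    rw [Finset.orderEmbOfFin_apply, List.getD_eq_getElem _ _ (by omega)]
    simp [Fin.getElem_fin]
  set a := A.orderEmbOfFin (rfl : A.card = A.card) with ha
  have hrange : ∀ b, b ∈ A ↔ ∃ i, a i = b := by
    intro b
    constructor
    · intro hb
      have : b ∈ Set.range a := by rw [Finset.range_orderEmbOfFin]; exact hb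
      exact this
    · rintro ⟨i, rfl⟩
      exact Finset.orderEmbOfFin_mem A rfl i
  have himg : A.filter (· ≤ x) = (Finset.univ.filter (fun i => a i ≤ x)).image a := by
    ext b
    simp only [Finset.mem_image, Finset.mem_filter, Finset.mem_univ, true_and]
    constructor
    · rintro ⟨hb, hbx⟩
      obtain ⟨i, rfl⟩ := (hrange b).1 hb
      exact ⟨i, hbx, rfl⟩
    · rintro ⟨i, hix, rfl⟩
      exact ⟨(hrange _).2 ⟨i, rfl⟩, hix⟩
  have hcard : (A.filter (· ≤ x)).card
      = (Finset.univ.filter (fun i : Fin A.card => a i ≤ x)).card := by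
    rw [himg, Finset.card_image_of_injective _ a.injective]
  rw [hgd, hcard]
  constructor
  · intro h
    have hsub : Finset.Iic (⟨s, hs⟩ : Fin A.card)
        ⊆ Finset.univ.filter (fun i => a i ≤ x) := by
      intro i hi
      simp only [Finset.mem_Iic] at hi
      simp only [Finset.mem_filter, Finset.mem_univ, true_and]
      exact le_trans (a.monotone hi) h
    have := Finset.card_le_card hsub
    rwa [Fin.card_Iic] at this
  · intro h
    by_contra hcon
    push_neg at hcon
    have hsub : Finset.univ.filter (fun i => a i ≤ x)
        ⊆ Finset.Iio (⟨s, hs⟩ : Fin A.card) := by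
      intro i hi
      simp only [Finset.mem_filter, Finset.mem_univ, true_and] at hi
      simp only [Finset.mem_Iio]
      exact a.strictMono.lt_iff_lt.mp (lt_of_le_of_lt hi hcon)
    have h2 := Finset.card_le_card hsub
    rw [Fin.card_Iio] at h2
    simp only [Fin.val_mk] at h2
    omega

lemma cnt_mono_iff (A B : Finset ℕ) (hBA : B.card ≤ A.card) :
    (∀ s < B.card, (A.sort (· ≤ ·)).getD s 0 ≤ (B.sort (· ≤ ·)).getD s 0) ↔
    ∀ x, (B.filter (· ≤ x)).card ≤ (A.filter (· ≤ x)).card := by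
  constructor
  · intro h x
    set c := (B.filter (· ≤ x)).card with hc
    rcases Nat.eq_zero_or_pos c with h0 | h0
    · omega
    have hcB : c ≤ B.card := Finset.card_le_card (Finset.filter_subset _ _)
    have hs : c - 1 < B.card := by omega
    have hBx : (B.sort (· ≤ ·)).getD (c-1) 0 ≤ x := by
      rw [cnt_lt_iff B (c-1) hs x]; omega
    have hAx : (A.sort (· ≤ ·)).getD (c-1) 0 ≤ x := le_trans (h _ hs) hBx
    have := (cnt_lt_iff A (c-1) (by omega) x).1 hAx
    omega
  · intro h s hs
    rw [cnt_lt_iff A s (by omega)]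
    exact lt_of_lt_of_le ((cnt_lt_iff B s hs _).1 le_rfl) (h _)

lemma cnt_Kmap (m n : ℕ) (I J : Finset ℕ) (hI : I ⊆ Finset.Icc 1 m)
    (hJ : J ⊆ Finset.Icc 1 n) (hc : I.card = J.card) (x : ℕ) :
    ((Kmap m n I J).filter (· ≤ x)).card =
      if x ≤ n then (J.filter (· ≤ x)).card
      else min (x - n) m + (I.filter (· ≤ m - (x - n))).card := by
  set f : ℕ → ℕ := fun i => n + m + 1 - i with hf
  set Img : Finset ℕ := I.image f with hImg
  have hIb : ∀ i ∈ I, 1 ≤ i ∧ i ≤ m := by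
    intro i hi; have := hI hi; rw [Finset.mem_Icc] at this; exact this
  have hJb : ∀ j ∈ J, 1 ≤ j ∧ j ≤ n := by
    intro j hj; have := hJ hj; rw [Finset.mem_Icc] at this; exact this
  have hImgb : ∀ y ∈ Img, n + 1 ≤ y ∧ y ≤ n + m := by
    intro y hy
    rw [hImg, Finset.mem_image] at hy
    obtain ⟨i, hi, rfl⟩ := hy
    have := hIb i hi; simp only [hf]; omega
  have hKm : Kmap m n I J = J ∪ (Finset.Icc (n+1) (n+m) \ Img) := by
    rw [Kmap, ← hf, ← hImg]
    ext y
    simp only [Finset.mem_sdiff, Finset.mem_union, Finset.mem_Icc]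
    constructor
    · rintro ⟨hy1 | hy1, hy2⟩
      · exact Or.inl hy1
      · exact Or.inr ⟨hy1, hy2⟩
    · rintro (hy | ⟨hy1, hy2⟩)
      · refine ⟨Or.inl hy, fun hcon => ?_⟩
        have := hImgb y hcon; have := hJb y hy; omega
      · exact ⟨Or.inr hy1, hy2⟩
  have hdisj : Disjoint (J.filter (· ≤ x)) ((Finset.Icc (n+1) (n+m) \ Img).filter (· ≤ x)) := by
    rw [Finset.disjoint_left]
    intro y hy1 hy2
    simp only [Finset.mem_filter, Finset.mem_sdiff, Finset.mem_Icc] at hy1 hy2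
    have := hJb y hy1.1; omega
  rw [hKm, Finset.filter_union, Finset.card_union_of_disjoint hdisj]
  by_cases hx : x ≤ n
  · rw [if_pos hx]
    have : (Finset.Icc (n+1) (n+m) \ Img).filter (· ≤ x) = ∅ := by
      rw [Finset.filter_eq_empty_iff]
      intro y hy
      simp only [Finset.mem_sdiff, Finset.mem_Icc] at hy
      omega
    rw [this, Finset.card_empty]
    omega
  · rw [if_neg hx]
    push_neg at hx
    have hJfull : J.filter (· ≤ x) = J := by
      rw [Finset.filter_true_of_mem]
      intro j hj; have := hJb j hj; omega
    have h2 : (Finset.Icc (n+1) (n+m) \ Img).filter (· ≤ x)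
        = Finset.Icc (n+1) (min (n+m) x) \ Img.filter (· ≤ x) := by
      ext y
      simp only [Finset.mem_filter, Finset.mem_sdiff, Finset.mem_Icc]
      constructor
      · rintro ⟨⟨⟨h1, h2⟩, h3⟩, h4⟩
        exact ⟨⟨h1, by omega⟩, fun hcon => h3 hcon.1⟩
      · rintro ⟨⟨h1, h2⟩, h3⟩
        refine ⟨⟨⟨h1, by omega⟩, fun hcon => h3 ⟨hcon, by omega⟩⟩, by omega⟩
    have hsub : Img.filter (· ≤ x) ⊆ Finset.Icc (n+1) (min (n+m) x) := by
      intro y hy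
      simp only [Finset.mem_filter] at hy
      have := hImgb y hy.1
      simp only [Finset.mem_Icc]
      omega
    rw [h2, Finset.card_sdiff_of_subset hsub, Nat.card_Icc]
    have hIccc : min (n+m) x + 1 - (n+1) = min (x - n) m := by omega
    have hinj : Set.InjOn f I := by
      intro a ha b hb hab
      have := hIb a ha; have := hIb b hb
      simp only [hf] at hab; omega
    have himgf : Img.filter (· ≤ x) = (I.filter (fun i => f i ≤ x)).image f := by
      rw [hImg]
      ext y
      simp only [Finset.mem_filter, Finset.mem_image]
      constructor
      · rintro ⟨⟨i, hi, rfl⟩, hyx⟩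
        exact ⟨i, ⟨hi, hyx⟩, rfl⟩
      · rintro ⟨i, ⟨hi, hix⟩, rfl⟩
        exact ⟨⟨i, hi, rfl⟩, hix⟩
    have hcImgf : (Img.filter (· ≤ x)).card = (I.filter (fun i => f i ≤ x)).card := by
      rw [himgf]
      exact Finset.card_image_of_injOn (hinj.mono (by intro a ha; exact (Finset.mem_filter.1 ha).1))
    have hflip : I.filter (fun i => f i ≤ x) = I.filter (fun i => ¬ i ≤ m - (x - n)) := by
      ext i
      simp only [Finset.mem_filter, hf]
      refine and_congr_right fun hi => ?_
      have := hIb i hi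
      omega
    have hpart := Finset.card_filter_add_card_filter_not (s := I)
      (p := fun i => i ≤ m - (x - n))
    rw [hflip] at hcImgf
    have hsubcard := Finset.card_le_card hsub
    rw [Nat.card_Icc] at hsubcard
    rw [hJfull, hcImgf] at *
    omega

lemma filt_full {S : Finset ℕ} {c x : ℕ} (hS : S ⊆ Finset.Icc 1 c) (hx : c ≤ x) :
    S.filter (· ≤ x) = S := by
  rw [Finset.filter_true_of_mem]
  intro j hj
  have := hS hj
  rw [Finset.mem_Icc] at this
  omega

lemma card_Kmap (m n : ℕ) (hm : 1 ≤ m) (I J : Finset ℕ) (hI : I ⊆ Finset.Icc 1 m)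
    (hJ : J ⊆ Finset.Icc 1 n) (hc : I.card = J.card) :
    (Kmap m n I J).card = m := by
  have hsub : Kmap m n I J ⊆ Finset.Icc 1 (n + m) := by
    intro y hy
    rw [Kmap, Finset.mem_sdiff, Finset.mem_union] at hy
    rcases hy.1 with h | h
    · have := hJ h; rw [Finset.mem_Icc] at this ⊢; omega
    · rw [Finset.mem_Icc] at h ⊢; omega
  have := cnt_Kmap m n I J hI hJ hc (n + m)
  rw [filt_full hsub le_rfl, if_neg (by omega)] at this
  have h0 : I.filter (· ≤ m - (n + m - n)) = ∅ := by
    rw [Finset.filter_eq_empty_iff]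
    intro i hi
    have := hI hi; rw [Finset.mem_Icc] at this; omega
  rw [h0] at this
  simp at this
  omega

/-- The bijection `δ_{m,n} : Δ_{m,n} → Π_{m,m+n} \ {M}` is an isomorphism of
partially ordered sets. -/
theorem stmt10 (m n : ℕ) (hm : 1 ≤ m) (hmn : m ≤ n) :
    ∀ I J K L : Finset ℕ, I ⊆ Finset.Icc 1 m → J ⊆ Finset.Icc 1 n →
      I.card = J.card → 1 ≤ I.card →
      K ⊆ Finset.Icc 1 m → L ⊆ Finset.Icc 1 n → K.card = L.card → 1 ≤ K.card →
      (deltaLe I J K L ↔ leSt (Kmap m n I J) (Kmap m n K L)) := by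
  intro I J K L hI hJ hIJ hI1 hK hL hKL hK1
  have hIm : I.card ≤ m := by
    have := Finset.card_le_card hI; rw [Nat.card_Icc] at this; omega
  have hKm : K.card ≤ m := by
    have := Finset.card_le_card hK; rw [Nat.card_Icc] at this; omega
  have hcI : (Kmap m n I J).card = m := card_Kmap m n hm I J hI hJ hIJ
  have hcK : (Kmap m n K L).card = m := card_Kmap m n hm K L hK hL hKL
  -- the counting condition
  have key1 : deltaLe I J K L ↔
      ∀ x, (K.filter (· ≤ x)).card ≤ (I.filter (· ≤ x)).card ∧
        (L.filter (· ≤ x)).card ≤ (J.filter (· ≤ x)).card := by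
    constructor
    · rintro ⟨hcard, hst⟩ x
      refine ⟨(cnt_mono_iff I K hcard).1 (fun s hs => (hst s hs).1) x, ?_⟩
      exact (cnt_mono_iff J L (by omega)).1 (fun s hs => (hst s (by omega)).2) x
    · intro hP
      have hLn : L.filter (· ≤ n) = L := filt_full hL le_rfl
      have hJn : (J.filter (· ≤ n)).card ≤ J.card :=
        Finset.card_le_card (Finset.filter_subset _ _)
      have hcard : K.card ≤ I.card := by
        have := (hP n).2; rw [hLn] at this; omega
      refine ⟨hcard, fun s hs => ⟨?_, ?_⟩⟩
      · exact (cnt_mono_iff I K hcard).2 (fun x => (hP x).1) s hs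
      · exact (cnt_mono_iff J L (by omega)).2 (fun x => (hP x).2) s (by omega)
  have key2 : leSt (Kmap m n I J) (Kmap m n K L) ↔
      ∀ x, ((Kmap m n K L).filter (· ≤ x)).card ≤ ((Kmap m n I J).filter (· ≤ x)).card := by
    rw [leSt, List.forall₂_iff_get]
    have hl1 : ((Kmap m n I J).sort (· ≤ ·)).length = m := by
      rw [Finset.length_sort]; exact hcI
    have hl2 : ((Kmap m n K L).sort (· ≤ ·)).length = m := by
      rw [Finset.length_sort]; exact hcK
    rw [← cnt_mono_iff _ _ (by omega)]
    constructor
    · rintro ⟨_, h⟩ s hs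
      rw [List.getD_eq_getElem _ _ (by omega), List.getD_eq_getElem _ _ (by omega)]
      exact h s (by omega) (by omega)
    · intro h
      refine ⟨by omega, fun i h1 h2 => ?_⟩
      have := h i (by omega)
      rwa [List.getD_eq_getElem _ _ (by omega), List.getD_eq_getElem _ _ (by omega)] at this
  rw [key1, key2]
  constructor
  · intro hP x
    rw [cnt_Kmap m n I J hI hJ hIJ, cnt_Kmap m n K L hK hL hKL]
    by_cases hx : x ≤ n
    · rw [if_pos hx, if_pos hx]; exact (hP x).2
    · rw [if_neg hx, if_neg hx]
      have := (hP (m - (x - n))).1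
      omega
  · intro h x
    have hn := h n
    rw [cnt_Kmap m n I J hI hJ hIJ, cnt_Kmap m n K L hK hL hKL, if_pos le_rfl, if_pos le_rfl,
      filt_full hJ le_rfl, filt_full hL le_rfl] at hn
    constructor
    · by_cases hx : x < m
      · have hh := h (n + (m - x))
        rw [cnt_Kmap m n I J hI hJ hIJ, cnt_Kmap m n K L hK hL hKL,
          if_neg (by omega), if_neg (by omega)] at hh
        have hxx : m - (n + (m - x) - n) = x := by omega
        rw [hxx] at hh
        omega
      · rw [filt_full hK (by omega), filt_full hI (by omega)]
        omega
    · by_cases hx : x ≤ n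
      · have hh := h x
        rwa [cnt_Kmap m n I J hI hJ hIJ, cnt_Kmap m n K L hK hL hKL,
          if_pos hx, if_pos hx] at hh
      · rw [filt_full hL (by omega), filt_full hJ (by omega)]
        omega
end

section
/- Let $m \le n$ and let $\delta = (\{i_1 < \dots < i_r\}, \{j_1 < \dots < j_r\}) \in \Delta_{m,n}$ be an index pair of cardinality $r$. The rank of the subposet $\{\alpha \in \Delta_{m,n} : \alpha \ge_{st} \delta\}$ of $\Delta_{m,n}$ equals $(m+n)r - \sum_{s=1}^r (i_s + j_s) + r$. -/
open Finset

def countLE (A : Finset ℕ) (y : ℕ) : ℕ := #{x ∈ A | x ≤ y}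

lemma sort_getD_le_iff {A : Finset ℕ} {s y : ℕ} (hs : s < #A) :
    (A.sort (· ≤ ·)).getD s 0 ≤ y ↔ s < countLE A y := by
  set e := A.orderEmbOfFin rfl
  have hgetD : (A.sort (· ≤ ·)).getD s 0 = e ⟨s, hs⟩ := by
    rw [List.getD_eq_getElem _ _ (by rwa [length_sort]), orderEmbOfFin_apply]; rfl
  rw [hgetD, countLE]
  constructor
  · intro h
    have hsub : (Iic (⟨s, hs⟩ : Fin #A)).map e.toEmbedding ⊆ {x ∈ A | x ≤ y} := by
      intro x hx
      obtain ⟨i, hi, rfl⟩ := mem_map.mp hx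
      exact mem_filter.mpr ⟨orderEmbOfFin_mem _ _ _, (e.monotone (mem_Iic.mp hi)).trans h⟩
    simpa using card_le_card hsub
  · intro h
    by_contra! hlt
    have hsub : {x ∈ A | x ≤ y} ⊆ (Iio (⟨s, hs⟩ : Fin #A)).map e.toEmbedding := by
      intro x hx
      obtain ⟨hxA, hxy⟩ := mem_filter.mp hx
      obtain ⟨i, rfl⟩ : x ∈ Set.range e := by rwa [range_orderEmbOfFin]
      exact mem_map_of_mem _ (mem_Iio.mpr (e.lt_iff_lt.mp (hxy.trans_lt hlt)))
    have := card_le_card hsub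
    simp only [card_map, Fin.card_Iio] at this
    omega

lemma countLE_le_card (A : Finset ℕ) (y : ℕ) : countLE A y ≤ #A :=
  card_filter_le _ _

lemma sort_getD_le_iff_countLE {A B : Finset ℕ} (h : #B ≤ #A) :
    (∀ s < #B, (A.sort (· ≤ ·)).getD s 0 ≤ (B.sort (· ≤ ·)).getD s 0) ↔
      ∀ y, countLE B y ≤ countLE A y := by
  constructor
  · intro hs y
    by_contra! hlt
    have hB : countLE B y - 1 < #B := by have := countLE_le_card B y; omega
    have hBy := (sort_getD_le_iff hB).mpr (by omega : countLE B y - 1 < countLE B y)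
    have := (sort_getD_le_iff (hB.trans_le h)).mp ((hs _ hB).trans hBy)
    omega
  · intro hy s hs
    exact (sort_getD_le_iff (hs.trans_le h)).mpr
      (((sort_getD_le_iff hs).mp le_rfl).trans_le (hy _))

lemma deltaLe_iff_countLE {I J K L : Finset ℕ} (hIJ : #I = #J) (hKL : #K = #L) :
    deltaLe I J K L ↔
      #K ≤ #I ∧ (∀ y, countLE K y ≤ countLE I y) ∧ ∀ y, countLE L y ≤ countLE J y := by
  refine ⟨fun ⟨hcard, hs⟩ => ⟨hcard, ?_, ?_⟩, fun ⟨hcard, hK, hL⟩ => ⟨hcard, fun s hs => ⟨?_, ?_⟩⟩⟩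
  · exact (sort_getD_le_iff_countLE hcard).mp fun s h => (hs s h).1
  · exact (sort_getD_le_iff_countLE (by omega)).mp fun s h => (hs s (by omega)).2
  · exact (sort_getD_le_iff_countLE hcard).mpr hK s hs
  · exact (sort_getD_le_iff_countLE (by omega)).mpr hL s (by omega)

lemma deltaLe_refl (I J : Finset ℕ) : deltaLe I J I J :=
  ⟨le_rfl, fun _ _ => ⟨le_rfl, le_rfl⟩⟩

lemma deltaLe_trans {I J K L P Q : Finset ℕ} (h₁ : deltaLe I J K L) (h₂ : deltaLe K L P Q) :
    deltaLe I J P Q := by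
  obtain ⟨hcard₁, hs₁⟩ := h₁
  obtain ⟨hcard₂, hs₂⟩ := h₂
  refine ⟨hcard₂.trans hcard₁, fun s hs => ?_⟩
  obtain ⟨hK, hL⟩ := hs₁ s (hs.trans_le hcard₂)
  obtain ⟨hP, hQ⟩ := hs₂ s hs
  exact ⟨hK.trans hP, hL.trans hQ⟩

lemma countLE_succ (A : Finset ℕ) (y : ℕ) :
    countLE A (y + 1) = countLE A y + if y + 1 ∈ A then 1 else 0 := by
  simp only [countLE, card_filter, ← sum_ite_eq' A (y + 1) (fun _ => 1), ← sum_add_distrib]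
  exact sum_congr rfl fun x _ => by split_ifs <;> omega

lemma countLE_eq_card {A : Finset ℕ} {m y : ℕ} (hA : A ⊆ Icc 1 m) (hy : m ≤ y) :
    countLE A y = #A := by
  rw [countLE, filter_true_of_mem fun x hx => (mem_Icc.mp (hA hx)).2.trans hy]

lemma countLE_le_countLE_of_subset {A B : Finset ℕ} (h : A ⊆ B) (y : ℕ) :
    countLE A y ≤ countLE B y :=
  card_le_card (filter_subset_filter _ h)

lemma eq_of_countLE_eq {A B : Finset ℕ} {m : ℕ} (hA : A ⊆ Icc 1 m) (hB : B ⊆ Icc 1 m)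
    (hcard : #A = #B) (h : ∀ y < m, countLE A y = countLE B y) : A = B := by
  have h' (y : ℕ) : countLE A y = countLE B y := by
    rcases lt_or_ge y m with hy | hy
    · exact h y hy
    · rw [countLE_eq_card hA hy, countLE_eq_card hB hy, hcard]
  ext x
  rcases x with _ | y
  · have h0A : 0 ∉ A := fun h => by simpa using (mem_Icc.mp (hA h)).1
    have h0B : 0 ∉ B := fun h => by simpa using (mem_Icc.mp (hB h)).1
    simp [h0A, h0B]
  · have := countLE_succ A y
    have := countLE_succ B y
    have := h' y
    have := h' (y + 1)
    constructor <;> intro hx <;> by_contra hx' <;> simp_all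

lemma sum_countLE_add_sum {A : Finset ℕ} {m : ℕ} (hA : A ⊆ Icc 1 m) :
    ∑ y ∈ range m, countLE A y + ∑ x ∈ A, x = m * #A := by
  have hcount : ∑ y ∈ range m, countLE A y = ∑ x ∈ A, (m - x) := by
    simp only [countLE, card_filter]
    rw [sum_comm]
    refine sum_congr rfl fun x _ => ?_
    rw [← card_filter, show {y ∈ range m | x ≤ y} = Ico x m by ext; simp only [mem_filter, mem_range, mem_Ico]; omega,
      Nat.card_Ico]
  rw [hcount, ← sum_add_distrib,
    sum_congr rfl fun x hx => Nat.sub_add_cancel (mem_Icc.mp (hA hx)).2, sum_const,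
    smul_eq_mul, mul_comm]

lemma exists_raise {A : Finset ℕ} {k : ℕ} (hA : A ⊆ Icc 1 k) (hne : A.Nonempty) (hk : k ∉ A) :
    ∃ B ⊆ Icc 1 k, #B = #A ∧ ∑ x ∈ B, x = ∑ x ∈ A, x + 1 ∧ ∀ y, countLE B y ≤ countLE A y := by
  set a := A.max' hne
  have ha : a ∈ A := max'_mem A hne
  have hak : a < k := lt_of_le_of_ne (mem_Icc.mp (hA ha)).2 fun h => hk (h ▸ ha)
  have hnot : a + 1 ∉ A.erase a := fun h => by
    have := le_max' A _ (mem_of_mem_erase h)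
    omega
  refine ⟨insert (a + 1) (A.erase a), ?_, ?_, ?_, fun y => ?_⟩
  · exact insert_subset (mem_Icc.mpr ⟨by omega, hak⟩) ((erase_subset _ _).trans hA)
  · rw [card_insert_of_notMem hnot, card_erase_add_one ha]
  · rw [sum_insert hnot, ← sum_erase_add _ _ ha]
    omega
  · simp only [countLE, card_filter]
    rw [sum_insert hnot, ← sum_erase_add _ _ ha]
    split_ifs <;> omega

def IsIndexPair (m n : ℕ) (p : Finset ℕ × Finset ℕ) : Prop :=
  p.1 ⊆ Icc 1 m ∧ p.2 ⊆ Icc 1 n ∧ #p.1 = #p.2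

-- The `ρ` of the introduction, i.e. the rank of `{α ≥_st p}`.
def upRank (m n : ℕ) (p : Finset ℕ × Finset ℕ) : ℕ :=
  #p.1 + ∑ y ∈ range m, countLE p.1 y + ∑ y ∈ range n, countLE p.2 y

section
variable {m n : ℕ} {p q : Finset ℕ × Finset ℕ}

lemma upRank_add_sum (hp : IsIndexPair m n p) :
    upRank m n p + ∑ x ∈ p.1, x + ∑ x ∈ p.2, x = (m + n + 1) * #p.1 := by
  have h₁ := sum_countLE_add_sum hp.1
  have h₂ := sum_countLE_add_sum hp.2.1
  rw [← hp.2.2] at h₂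
  rw [upRank, add_mul, add_mul, one_mul]
  omega

lemma upRank_pos_iff (hp : IsIndexPair m n p) : 0 < upRank m n p ↔ 0 < #p.1 := by
  refine ⟨fun h => Nat.pos_of_ne_zero fun h0 => ?_, fun h => by unfold upRank; omega⟩
  have := upRank_add_sum hp
  rw [h0, mul_zero] at this
  omega

lemma upRank_le_of_deltaLe (hp : IsIndexPair m n p) (hq : IsIndexPair m n q)
    (h : deltaLe p.1 p.2 q.1 q.2) : upRank m n q ≤ upRank m n p := by
  obtain ⟨hcard, hK, hL⟩ := (deltaLe_iff_countLE hp.2.2 hq.2.2).mp h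
  unfold upRank
  gcongr with y _ y _
  exacts [hK y, hL y]

lemma upRank_lt_of_deltaLe (hp : IsIndexPair m n p) (hq : IsIndexPair m n q)
    (h : deltaLe p.1 p.2 q.1 q.2) (hne : p ≠ q) : upRank m n q < upRank m n p := by
  obtain ⟨hcard, hK, hL⟩ := (deltaLe_iff_countLE hp.2.2 hq.2.2).mp h
  refine (upRank_le_of_deltaLe hp hq h).lt_of_ne fun heq => hne ?_
  have hs₁ : ∑ y ∈ range m, countLE q.1 y ≤ ∑ y ∈ range m, countLE p.1 y :=
    sum_le_sum fun y _ => hK y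
  have hs₂ : ∑ y ∈ range n, countLE q.2 y ≤ ∑ y ∈ range n, countLE p.2 y :=
    sum_le_sum fun y _ => hL y
  unfold upRank at heq
  have hc₁ : #q.1 = #p.1 := by omega
  have hc₂ : #q.2 = #p.2 := by rw [← hp.2.2, ← hq.2.2, hc₁]
  have e₁ := (sum_eq_sum_iff_of_le (s := range m) fun y _ => hK y).mp (by omega)
  have e₂ := (sum_eq_sum_iff_of_le (s := range n) fun y _ => hL y).mp (by omega)
  exact Prod.ext (eq_of_countLE_eq hq.1 hp.1 hc₁ fun y hy => e₁ y (mem_range.mpr hy)).symm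
    (eq_of_countLE_eq hq.2.1 hp.2.1 hc₂ fun y hy => e₂ y (mem_range.mpr hy)).symm

lemma exists_cover (hp : IsIndexPair m n p) (h : 2 ≤ upRank m n p) :
    ∃ q, IsIndexPair m n q ∧ deltaLe p.1 p.2 q.1 q.2 ∧ upRank m n q + 1 = upRank m n p := by
  obtain ⟨hK, hL, hcard⟩ := hp
  have hrank := upRank_add_sum ⟨hK, hL, hcard⟩
  have hne : 0 < #p.1 := (upRank_pos_iff ⟨hK, hL, hcard⟩).mp (by omega)
  by_cases hm : m ∈ p.1
  · by_cases hn : n ∈ p.2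
    · have hm' := card_erase_add_one hm
      have hq : IsIndexPair m n (p.1.erase m, p.2.erase n) :=
        ⟨(erase_subset _ _).trans hK, (erase_subset _ _).trans hL,
          by rw [card_erase_of_mem hm, card_erase_of_mem hn, hcard]⟩
      have hsum₁ := sum_erase_add _ (fun x => x) hm
      have hsum₂ := sum_erase_add _ (fun x => x) hn
      refine ⟨_, hq, (deltaLe_iff_countLE hcard hq.2.2).mpr ⟨card_le_card (erase_subset _ _),
        countLE_le_countLE_of_subset (erase_subset _ _),
        countLE_le_countLE_of_subset (erase_subset _ _)⟩, ?_⟩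
      have hrank' := upRank_add_sum hq
      simp only at hsum₁ hsum₂ hrank'
      rw [← hm', mul_add, mul_one] at hrank
      omega
    · obtain ⟨L, hL', hcard', hsum, hcount⟩ := exists_raise hL (card_pos.mp (hcard ▸ hne)) hn
      have hq : IsIndexPair m n (p.1, L) := ⟨hK, hL', hcard.trans hcard'.symm⟩
      refine ⟨_, hq, (deltaLe_iff_countLE hcard hq.2.2).mpr ⟨le_rfl, fun _ => le_rfl, hcount⟩, ?_⟩
      have := upRank_add_sum hq
      simp only at this
      omega
  · obtain ⟨K, hK', hcard', hsum, hcount⟩ := exists_raise hK (card_pos.mp hne) hm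
    have hq : IsIndexPair m n (K, p.2) := ⟨hK', hL, hcard'.trans hcard⟩
    refine ⟨_, hq, (deltaLe_iff_countLE hcard hq.2.2).mpr ⟨hcard'.le, hcount, fun _ => le_rfl⟩, ?_⟩
    have := upRank_add_sum hq
    simp only [hcard'] at this
    omega

lemma exists_chain (hp : IsIndexPair m n p) :
    ∃ f : Fin (upRank m n p) → Finset ℕ × Finset ℕ,
      (∀ a, IsIndexPair m n (f a) ∧ deltaLe p.1 p.2 (f a).1 (f a).2 ∧
        upRank m n (f a) + a = upRank m n p) ∧
      ∀ a b, a < b → deltaLe (f a).1 (f a).2 (f b).1 (f b).2 := by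
  generalize hN : upRank m n p = N
  induction N generalizing p with
  | zero => exact ⟨Fin.elim0, fun a => a.elim0, fun a => a.elim0⟩
  | succ N ih =>
    rcases Nat.eq_zero_or_pos N with rfl | hN0
    · exact ⟨fun _ => p, fun a => ⟨hp, deltaLe_refl _ _, by dsimp only; omega⟩,
        fun a b hab => by omega⟩
    obtain ⟨q, hq, hpq, hqN⟩ := exists_cover hp (by omega)
    obtain ⟨f, hf, hchain⟩ := ih hq (by omega)
    refine ⟨Fin.cons p f, fun a => ?_, fun a b hab => ?_⟩
    · cases a using Fin.cases with
      | zero => exact ⟨hp, deltaLe_refl _ _, by simpa using hN⟩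
      | succ a =>
        obtain ⟨hfa, hqfa, hrank⟩ := hf a
        exact ⟨hfa, deltaLe_trans hpq hqfa, by simp only [Fin.cons_succ, Fin.val_succ]; omega⟩
    · cases b using Fin.cases with
      | zero => exact absurd hab (Fin.not_lt_zero _)
      | succ b =>
        cases a using Fin.cases with
        | zero => exact deltaLe_trans hpq (hf b).2.1
        | succ a => exact hchain a b (Fin.succ_lt_succ_iff.mp hab)

lemma card_le_upRank_of_chain (hp : IsIndexPair m n p) {k : ℕ} (f : Fin k → Finset ℕ × Finset ℕ)
    (hf : ∀ a, IsIndexPair m n (f a) ∧ 0 < #(f a).1 ∧ deltaLe p.1 p.2 (f a).1 (f a).2)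
    (hchain : ∀ a b, a < b → deltaLe (f a).1 (f a).2 (f b).1 (f b).2 ∧ f a ≠ f b) :
    k ≤ upRank m n p := by
  have hanti : StrictAnti fun a => upRank m n (f a) := fun a b hab =>
    upRank_lt_of_deltaLe (hf a).1 (hf b).1 (hchain a b hab).1 (hchain a b hab).2
  have hmaps : Set.MapsTo (fun a => upRank m n (f a)) (univ : Finset (Fin k))
      (Icc 1 (upRank m n p)) := fun a _ =>
    mem_Icc.mpr ⟨(upRank_pos_iff (hf a).1).mpr (hf a).2.1,
      upRank_le_of_deltaLe hp (hf a).1 (hf a).2.2⟩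
  simpa using card_le_card_of_injOn _ hmaps hanti.injective.injOn

end

theorem stmt17_general (m n : ℕ) (I J : Finset ℕ)
    (hI : I ⊆ Finset.Icc 1 m) (hJ : J ⊆ Finset.Icc 1 n) (hc : I.card = J.card)
    (r : ℕ) (hr : I.card = r) :
    ∃ N : ℕ,
      (N : ℤ) = ((m : ℤ) + (n : ℤ)) * r - (∑ x ∈ I, (x : ℤ)) - (∑ x ∈ J, (x : ℤ)) + r ∧
      IsGreatest {k : ℕ | ∃ f : Fin k → Finset ℕ × Finset ℕ,
        (∀ a, (f a).1 ⊆ Finset.Icc 1 m ∧ (f a).2 ⊆ Finset.Icc 1 n ∧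
          (f a).1.card = (f a).2.card ∧ 1 ≤ (f a).1.card ∧
          deltaLe I J (f a).1 (f a).2) ∧
        (∀ a b : Fin k, a < b →
          deltaLe (f a).1 (f a).2 (f b).1 (f b).2 ∧ f a ≠ f b)} N := by
  have hp : IsIndexPair m n (I, J) := ⟨hI, hJ, hc⟩
  refine ⟨upRank m n (I, J), ?_, ?_, ?_⟩
  · have h : ((upRank m n (I, J) + ∑ x ∈ I, x + ∑ x ∈ J, x : ℕ) : ℤ) = ((m + n + 1) * #I : ℕ) :=
      congrArg _ (upRank_add_sum hp)
    push_cast at h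
    rw [← hr]
    linarith
  · obtain ⟨f, hf, hchain⟩ := exists_chain hp
    refine ⟨f, fun a => ?_, fun a b hab => ⟨hchain a b hab, fun he => ?_⟩⟩
    · obtain ⟨⟨hK, hL, hcard⟩, hle, hrank⟩ := hf a
      exact ⟨hK, hL, hcard, (upRank_pos_iff ⟨hK, hL, hcard⟩).mp (by omega), hle⟩
    · have ha := (hf a).2.2
      have hb := (hf b).2.2
      rw [he] at ha
      exact (Fin.val_ne_of_ne hab.ne) (by omega)
  · rintro k ⟨f, hf, hchain⟩
    refine card_le_upRank_of_chain hp f (fun a => ?_) hchain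
    obtain ⟨hK, hL, hcard, hpos, hle⟩ := hf a
    exact ⟨⟨hK, hL, hcard⟩, hpos, hle⟩

/-- The rank (maximal number of elements in a chain) of the subposet
`{α ∈ Δ_{m,n} : α ≥_st δ}` for an index pair `δ = (I,J)` of cardinality `r`
equals `(m+n)r - ∑ (i_s + j_s) + r`. -/
theorem stmt17 (m n : ℕ) (hmn : m ≤ n) (I J : Finset ℕ)
    (hI : I ⊆ Finset.Icc 1 m) (hJ : J ⊆ Finset.Icc 1 n) (hc : I.card = J.card)
    (r : ℕ) (hr : I.card = r) (hr1 : 1 ≤ r) :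
    ∃ N : ℕ,
      (N : ℤ) = ((m : ℤ) + (n : ℤ)) * r - (∑ x ∈ I, (x : ℤ)) - (∑ x ∈ J, (x : ℤ)) + r ∧
      IsGreatest {k : ℕ | ∃ f : Fin k → Finset ℕ × Finset ℕ,
        (∀ a, (f a).1 ⊆ Finset.Icc 1 m ∧ (f a).2 ⊆ Finset.Icc 1 n ∧
          (f a).1.card = (f a).2.card ∧ 1 ≤ (f a).1.card ∧
          deltaLe I J (f a).1 (f a).2) ∧
        (∀ a b : Fin k, a < b →
          deltaLe (f a).1 (f a).2 (f b).1 (f b).2 ∧ f a ≠ f b)} N :=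
  stmt17_general m n I J hI hJ hc r hr
end
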